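/- arXiv:2605.00752 — 8 statements merged into one kernel-verified Lean document; each statement's English description precedes it below -/
import Mathlib

section
/- Let S = (X, X₀, f) be a system with nondeterministic transitions f : X → Set X, and let B : X → ℝ satisfy: B(x₀) ≥ 0 for all x₀ ∈ X₀; B(x_u) < 0 for all x_u ∈ X_U; and for all x ∈ X and all x' ∈ f(x), B(x) ≥ 0 implies B(x') ≥ 0. Then for every state sequence ρ : ℕ → X with ρ(0) ∈ X₀ and ρ(i+1) ∈ f(ρ(i)) for all i, we have ρ(i) ∉ X_U for all i ∈ ℕ. -/
/-- Barrier certificate soundness for nondeterministic discrete-time systems. -/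
theorem barrier_safety_nondet {X : Type*} (f : X → Set X) (X0 XU : Set X) (B : X → ℝ)
    (hinit : ∀ x0 ∈ X0, 0 ≤ B x0)
    (hunsafe : ∀ xu ∈ XU, B xu < 0)
    (hstep : ∀ x, ∀ x' ∈ f x, 0 ≤ B x → 0 ≤ B x') :
    ∀ ρ : ℕ → X, ρ 0 ∈ X0 → (∀ i : ℕ, ρ (i + 1) ∈ f (ρ i)) →
      ∀ i : ℕ, ρ i ∉ XU := by
  intro ρ h0 hstep' i hu
  have hB : ∀ i, 0 ≤ B (ρ i) := by
    intro i
    induction i with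
    | zero => exact hinit _ h0
    | succ n ih => exact hstep _ _ (hstep' n) ih
  exact absurd (hB i) (not_le.mpr (hunsafe _ hu))
end

section
/- Let S = (X, X₀, f) be a system with f : X → X, let X_VF ⊆ X, and suppose T : X × X → ℝ is a closure certificate such that there exists ξ > 0 with: for all x₀ ∈ X₀ and all y', y'' ∈ X_VF, if T(x₀, y') ≥ 0 and T(y', y'') ≥ 0 then T(x₀, y'') ≤ T(x₀, y') − ξ. Assume furthermore T is bounded below on X₀ × X_VF. Then every state sequence ⟨x₀, f(x₀), f²(x₀), …⟩ with x₀ ∈ X₀ visits X_VF only finitely often; i.e., there exists j ∈ ℕ such that fⁱ(x₀) ∉ X_VF for all i > j. -/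
/-- A closure certificate for persistence ensures the set `XVF` is visited
only finitely often along the deterministic trajectory from any initial state. -/
theorem closure_certificate_persistence {X : Type*} (f : X → X) (X0 XVF : Set X)
    (T : X → X → ℝ)
    (hbase : ∀ x, 0 ≤ T x (f x))
    (hind : ∀ x y, 0 ≤ T (f x) y → 0 ≤ T x y)
    (ξ : ℝ) (hξ : 0 < ξ)
    (hdec : ∀ x0 ∈ X0, ∀ y' ∈ XVF, ∀ y'' ∈ XVF,
      0 ≤ T x0 y' → 0 ≤ T y' y'' → T x0 y'' ≤ T x0 y' - ξ)
    (M : ℝ) (hM : ∀ x0 ∈ X0, ∀ y ∈ XVF, M ≤ T x0 y) :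
    ∀ x0 ∈ X0, ∃ j : ℕ, ∀ i > j, f^[i] x0 ∉ XVF := by
  -- Key lemma: pulling back positivity along iterates
  have pull : ∀ k : ℕ, ∀ x y, 0 ≤ T (f^[k] x) y → 0 ≤ T x y := by
    intro k
    induction k with
    | zero => intro x y h; simpa using h
    | succ n ih =>
      intro x y h
      apply hind
      apply ih
      rwa [Function.iterate_succ_apply] at h
  -- T x (f^[n] x) ≥ 0 for n ≥ 1
  have pos : ∀ n : ℕ, 1 ≤ n → ∀ x, 0 ≤ T x (f^[n] x) := by
    intro n hn x
    obtain ⟨m, rfl⟩ := Nat.exists_eq_add_of_le hn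
    apply pull m
    have : f^[1 + m] x = f (f^[m] x) := by
      rw [add_comm, Function.iterate_succ_apply']
    rw [this]
    exact hbase _
  intro x0 hx0
  by_contra hcon
  push_neg at hcon
  -- build strictly increasing sequence of visit times
  choose g hg hgmem using hcon
  -- sequence of visit times: iterate g starting from g 0
  set s : ℕ → ℕ := fun k => g^[k+1] 0 with hs
  have smem : ∀ k, f^[s k] x0 ∈ XVF := by
    intro k
    induction k with
    | zero => exact hgmem 0
    | succ n ih =>
      have : s (n+1) = g (s n) := by
        simp [hs, Function.iterate_succ_apply']
      rw [this]; exact hgmem _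
  have smono : ∀ k, s k < s (k+1) := by
    intro k
    have h : s (k+1) = g (s k) := by
      simp [hs, Function.iterate_succ_apply']
    rw [h]; exact hg _
  have spos : ∀ k, 1 ≤ s k := by
    intro k
    induction k with
    | zero => exact hg 0
    | succ n ih => exact le_trans ih (le_of_lt (smono n))
  have Tpos : ∀ k, 0 ≤ T x0 (f^[s k] x0) := fun k => pos _ (spos k) x0
  have Tstep : ∀ k, T x0 (f^[s (k+1)] x0) ≤ T x0 (f^[s k] x0) - ξ := by
    intro k
    have hm := smono k
    have h1 : 0 ≤ T (f^[s k] x0) (f^[s (k+1)] x0) := by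
      have he : f^[s (k+1)] x0 = f^[s (k+1) - s k] (f^[s k] x0) := by
        rw [← Function.iterate_add_apply]
        congr 1
        omega
      rw [he]
      exact pos _ (by omega) _
    exact hdec x0 hx0 _ (smem k) _ (smem (k+1)) (Tpos k) h1
  have Tdesc : ∀ k, T x0 (f^[s k] x0) ≤ T x0 (f^[s 0] x0) - k * ξ := by
    intro k
    induction k with
    | zero => simp
    | succ n ih =>
      calc T x0 (f^[s (n+1)] x0) ≤ T x0 (f^[s n] x0) - ξ := Tstep n
        _ ≤ T x0 (f^[s 0] x0) - n * ξ - ξ := by linarith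
        _ = T x0 (f^[s 0] x0) - (n+1 : ℕ) * ξ := by push_cast; ring
  -- contradiction with lower bound M
  obtain ⟨k, hk⟩ := exists_nat_gt ((T x0 (f^[s 0] x0) - M) / ξ)
  have h1 := Tdesc k
  have h2 := hM x0 hx0 _ (smem k)
  have : (T x0 (f^[s 0] x0) - M) / ξ < k := hk
  rw [div_lt_iff₀ hξ] at this
  linarith
end

section
/- Suppose T : X × X → ℝ is a closure certificate for f : X → X and ξ > 0 satisfies: for all x₀ ∈ X₀ and y', y'' ∈ X_VF, (T(x₀, y') ≥ 0 ∧ T(y', y'') ≥ 0) implies T(x₀, y'') ≤ T(x₀, y') − ξ. If x₀ ∈ X₀ and i₁ < i₂ < … < i_k (all ≥ 1) are indices with fⁱ(x₀) ∈ X_VF for each i = i₁, …, i_k, then T(x₀, f^{i_k}(x₀)) ≤ T(x₀, f^{i₁}(x₀)) − (k−1)·ξ. -/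
private lemma cc_pos {X : Type*} (f : X → X) (T : X → X → ℝ)
    (hbase : ∀ x, 0 ≤ T x (f x))
    (hind : ∀ x y, 0 ≤ T (f x) y → 0 ≤ T x y) :
    ∀ n x, 0 ≤ T x (f^[n + 1] x) := by
  intro n
  induction n with
  | zero => intro x; simpa using hbase x
  | succ m ih =>
      intro x
      apply hind
      have := ih (f x)
      simpa [Function.iterate_succ_apply] using this

/-- Along strictly increasing visit times to `XVF`, the closure-certificate
value from the initial state decreases by at least `ξ` per visit. -/
theorem closure_certificate_decrease_along_visits {X : Type*} (f : X → X)
    (X0 XVF : Set X) (T : X → X → ℝ)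
    (hbase : ∀ x, 0 ≤ T x (f x))
    (hind : ∀ x y, 0 ≤ T (f x) y → 0 ≤ T x y)
    (ξ : ℝ) (hξ : 0 < ξ)
    (hdec : ∀ x0 ∈ X0, ∀ y' ∈ XVF, ∀ y'' ∈ XVF,
      0 ≤ T x0 y' → 0 ≤ T y' y'' → T x0 y'' ≤ T x0 y' - ξ)
    (x0 : X) (hx0 : x0 ∈ X0)
    (k : ℕ) (hk : 0 < k) (idx : Fin k → ℕ)
    (hmono : StrictMono idx)
    (hone : ∀ j, 1 ≤ idx j)
    (hvis : ∀ j, f^[idx j] x0 ∈ XVF) :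
    T x0 (f^[idx ⟨k - 1, by omega⟩] x0) ≤
      T x0 (f^[idx ⟨0, hk⟩] x0) - (k - 1 : ℕ) * ξ := by
  have key : ∀ m (hm : m < k),
      T x0 (f^[idx ⟨m, hm⟩] x0) ≤ T x0 (f^[idx ⟨0, hk⟩] x0) - (m : ℕ) * ξ := by
    intro m
    induction m with
    | zero => intro hm; simp
    | succ p ih =>
        intro hm
        have hp : p < k := by omega
        have step : T x0 (f^[idx ⟨p + 1, hm⟩] x0) ≤ T x0 (f^[idx ⟨p, hp⟩] x0) - ξ := by
          apply hdec x0 hx0 _ (hvis _) _ (hvis ⟨p + 1, hm⟩)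
          · have h1 := hone ⟨p, hp⟩
            have := cc_pos f T hbase hind (idx ⟨p, hp⟩ - 1) x0
            rwa [Nat.sub_add_cancel h1] at this
          · have hlt : idx ⟨p, hp⟩ < idx ⟨p + 1, hm⟩ := hmono (by simp)
            have heq : f^[idx ⟨p + 1, hm⟩] x0
                = f^[idx ⟨p + 1, hm⟩ - idx ⟨p, hp⟩] (f^[idx ⟨p, hp⟩] x0) := by
              rw [← Function.iterate_add_apply]
              congr 1
              omega
            rw [heq]
            have := cc_pos f T hbase hind (idx ⟨p + 1, hm⟩ - idx ⟨p, hp⟩ - 1)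
              (f^[idx ⟨p, hp⟩] x0)
            rwa [Nat.sub_add_cancel (by omega)] at this
        have := ih hp
        push_cast
        push_cast at this
        linarith
  have := key (k - 1) (by omega)
  convert this using 3
end

section
/- Consider the finite-state system of Figure 1: states {x₀, …, x₁₀}, initial states {x₀, x₅, x₈}, transitions x₀→x₁, x₀→x₃, x₁→x₂, x₃→x₄, x₂→x₂, x₄→x₄, x₅→x₆, x₆→x₇, x₇→x₇, x₈→x₉, x₉→x₁₀, x₁₀→x₁₀; output function o with o(x₄) = o(x₁₀) = red and all other states blue; secret states {x₀}. Then there exists NO augmented barrier certificate for opacity, i.e., no function B : X × X → ℝ and ξ > 0 such that (i) for the secret initial state x₀ there exists a same-output non-secret initial state x_ns with B(x₀, x_ns) ≥ 0; (ii) B(x, y) ≤ −ξ for all x, y with o(x) ≠ o(y); (iii) for all x, y and all x' ∈ f(x) there exists y' ∈ f(y) with B(x, y) ≥ 0 → B(x', y') ≥ 0. -/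
/-- Transition map of the system in Figure 1. -/
def fig1Step : Fin 11 → Set (Fin 11) := fun x =>
  if x = 0 then {1, 3}
  else if x = 1 then {2}
  else if x = 2 then {2}
  else if x = 3 then {4}
  else if x = 4 then {4}
  else if x = 5 then {6}
  else if x = 6 then {7}
  else if x = 7 then {7}
  else if x = 8 then {9}
  else if x = 9 then {10}
  else {10}

/-- Output map of the system in Figure 1: `false` is red, `true` is blue. -/
def fig1Out : Fin 11 → Bool := fun x => if x = 4 ∨ x = 10 then false else true

/-- There is no augmented barrier certificate proving initial-state opacity
of the system in Figure 1, even though the system is opaque. -/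
theorem no_augmented_barrier_fig1 :
    ¬ ∃ (B : Fin 11 → Fin 11 → ℝ) (ξ : ℝ), 0 < ξ ∧
      (∃ xns ∈ ({5, 8} : Set (Fin 11)), fig1Out 0 = fig1Out xns ∧ 0 ≤ B 0 xns) ∧
      (∀ x y : Fin 11, fig1Out x ≠ fig1Out y → B x y ≤ -ξ) ∧
      (∀ x y : Fin 11, ∀ x' ∈ fig1Step x, ∃ y' ∈ fig1Step y,
        (0 ≤ B x y → 0 ≤ B x' y')) := by
  rintro ⟨B, ξ, hξ, ⟨xns, hxns, -, hB0⟩, hii, hiii⟩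
  have key : ∀ x y x' y' : Fin 11, fig1Step y = {y'} → x' ∈ fig1Step x →
      0 ≤ B x y → 0 ≤ B x' y' := by
    intro x y x' y' hy hx hB
    obtain ⟨z, hz, h⟩ := hiii x y x' hx
    rw [hy] at hz
    simp only [Set.mem_singleton_iff] at hz
    subst hz; exact h hB
  have hxns' : xns = 5 ∨ xns = 8 := hxns
  rcases hxns' with h | h <;> subst h
  · have h36 : 0 ≤ B 3 6 := key 0 5 3 6 rfl (by simp [fig1Step]) hB0
    have h47 : 0 ≤ B 4 7 := key 3 6 4 7 rfl (by simp [fig1Step]) h36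
    have := hii 4 7 (by decide)
    linarith
  · have h19 : 0 ≤ B 1 9 := key 0 8 1 9 rfl (by simp [fig1Step]) hB0
    have h210 : 0 ≤ B 2 10 := key 1 9 2 10 rfl (by simp [fig1Step]) h19
    have := hii 2 10 (by decide)
    linarith
end

section
/- Let (X, f) be a deterministic system, Q a finite automaton state set with transition δ : Q → Q determined along the run, Q_Acc ⊆ Q accepting states, ξ > 0, and V : X × Q → ℝ a function satisfying: for all x ∈ X and q ∈ Q_Acc, V(x, q) ≥ 0 → V(f(x), δ(q)) ≥ 0; and for all x ∈ X and q ∉ Q_Acc, V(x, q) ≥ 0 → (V(f(x), δ(q)) ≥ 0 ∧ V(f(x), δ(q)) ≤ V(x, q) − ξ). Then for any x₀ ∈ X and q₀ ∈ Q with V(x₀, q₀) ≥ 0, the induced run ⟨q₀, δ(q₀), δ²(q₀), …⟩ paired with ⟨x₀, f(x₀), …⟩ visits Q_Acc infinitely often, i.e., for every j ∈ ℕ there exists i > j with δⁱ(q₀) ∈ Q_Acc. -/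
/-- Büchi ranking argument: a nonnegative certificate value that strictly
decreases by ξ on non-accepting automaton states forces the induced run to
visit the accepting states infinitely often. -/
theorem buchi_ranking_infinitely_often {X Q : Type*} [Finite Q]
    (f : X → X) (δ : Q → Q) (QAcc : Set Q)
    (ξ : ℝ) (hξ : 0 < ξ) (V : X → Q → ℝ)
    (hacc : ∀ x : X, ∀ q ∈ QAcc, 0 ≤ V x q → 0 ≤ V (f x) (δ q))
    (hrank : ∀ x : X, ∀ q ∉ QAcc, 0 ≤ V x q →
      0 ≤ V (f x) (δ q) ∧ V (f x) (δ q) ≤ V x q - ξ) :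
    ∀ (x0 : X) (q0 : Q), 0 ≤ V x0 q0 →
      ∀ j : ℕ, ∃ i > j, δ^[i] q0 ∈ QAcc := by
  intro x0 q0 h0 j
  set g : ℕ → ℝ := fun n => V (f^[n] x0) (δ^[n] q0) with hg
  have hstep : ∀ n, 0 ≤ g n → 0 ≤ g (n + 1) := by
    intro n hn
    by_cases hq : δ^[n] q0 ∈ QAcc
    · simpa [hg, Function.iterate_succ_apply'] using
        hacc (f^[n] x0) (δ^[n] q0) hq hn
    · simpa [hg, Function.iterate_succ_apply'] using
        (hrank (f^[n] x0) (δ^[n] q0) hq hn).1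
  have hnonneg : ∀ n, 0 ≤ g n := by
    intro n
    induction n with
    | zero => simpa [hg] using h0
    | succ k ih => exact hstep k ih
  by_contra hcon
  push_neg at hcon
  -- so for all i > j, δ^[i] q0 ∉ QAcc
  have hdec : ∀ k : ℕ, g (j + 1 + k) ≤ g (j + 1) - k * ξ := by
    intro k
    induction k with
    | zero => simp
    | succ m ih =>
        have hq : δ^[j + 1 + m] q0 ∉ QAcc := hcon (j + 1 + m) (by omega)
        have h := (hrank (f^[j+1+m] x0) (δ^[j+1+m] q0) hq (hnonneg _)).2
        have h' : g (j + 1 + (m + 1)) ≤ g (j + 1 + m) - ξ := by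
          have : j + 1 + (m + 1) = (j + 1 + m) + 1 := by omega
          rw [this]
          simpa [hg, Function.iterate_succ_apply'] using h
        push_cast
        nlinarith [hnonneg (j + 1 + m)]
  obtain ⟨k, hk⟩ := exists_nat_gt (g (j + 1) / ξ)
  have := hdec k
  have hkx : g (j + 1) < k * ξ := by
    rwa [div_lt_iff₀ hξ] at hk
  nlinarith [hnonneg (j + 1 + k)]
end

section
/- Consider the finite-state system of Figure 2: states {x₀, …, x₈}, initial states {x₀, x₄, x₆} with x₀ secret; transitions x₀→{x₁, x₂}, x₁→{x₃}, x₂→{x₃}, x₃→{x₃}, x₄→{x₅}, x₅→{x₈}, x₆→{x₇}, x₇→{x₈}, x₈→{x₈}; outputs o(x₁) = o(x₅) = red, all other states blue. Then there is no function B : X × X × X → ℝ with ξ > 0 satisfying the HyperCertificate conditions for opacity with single-state lookahead; in particular, any B satisfying B(x₀, x₄, x₃) ≥ 0 or B(x₀, x₆, x₃) ≥ 0 together with the step condition forces B(x₂, x₅, x₃) ≥ 0 or B(x₁, x₇, x₃) ≥ 0, contradicting the requirement B(x, y, z) ≤ −ξ whenever o(x) ≠ o(y). -/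
/-- Transition map of the system in Figure 2. -/
def fig2Step : Fin 9 → Set (Fin 9) := fun x =>
  if x = 0 then {1, 2}
  else if x = 1 then {3}
  else if x = 2 then {3}
  else if x = 3 then {3}
  else if x = 4 then {5}
  else if x = 5 then {8}
  else if x = 6 then {7}
  else if x = 7 then {8}
  else {8}

/-- Output map of the system in Figure 2: `false` is red, `true` is blue. -/
def fig2Out : Fin 9 → Bool := fun x => if x = 1 ∨ x = 5 then false else true

/-- Reachability in at least one step in the system of Figure 2. -/
def fig2Reach (x y : Fin 9) : Prop :=
  Relation.TransGen (fun a b => b ∈ fig2Step a) x y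

/-- `fig2InPath x y z` asserts that `y` lies on a path from `x` to `z`
(or equals an endpoint). -/
def fig2InPath (x y z : Fin 9) : Prop :=
  (fig2Reach x y ∧ fig2Reach y z) ∨ y = x ∨ y = z

lemma step01 : (1 : Fin 9) ∈ fig2Step 0 := by simp [fig2Step]
lemma step02 : (2 : Fin 9) ∈ fig2Step 0 := by simp [fig2Step]
lemma step13 : (3 : Fin 9) ∈ fig2Step 1 := by simp [fig2Step]
lemma step23 : (3 : Fin 9) ∈ fig2Step 2 := by simp [fig2Step]

lemma reach03 : fig2Reach 0 3 :=
  Relation.TransGen.head step01 (Relation.TransGen.single step13)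

lemma inPath1 : fig2InPath 0 1 3 :=
  Or.inl ⟨Relation.TransGen.single step01, Relation.TransGen.single step13⟩

lemma inPath2 : fig2InPath 0 2 3 :=
  Or.inl ⟨Relation.TransGen.single step02, Relation.TransGen.single step23⟩

/-- No HyperCertificate with single-state lookahead certifies opacity of the
system in Figure 2, even though the system is opaque. -/
theorem no_hyperCertificate_fig2 :
    ¬ ∃ (B : Fin 9 → Fin 9 → Fin 9 → ℝ) (ξ : ℝ), 0 < ξ ∧
      (∀ z : Fin 9, fig2Reach 0 z →
        ∃ xns ∈ ({4, 6} : Set (Fin 9)), fig2Out 0 = fig2Out xns ∧ 0 ≤ B 0 xns z) ∧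
      (∀ x y z : Fin 9, fig2Out x ≠ fig2Out y → B x y z ≤ -ξ) ∧
      (∀ x y z : Fin 9, ∀ x' ∈ fig2Step x, fig2InPath 0 x' z →
        ∃ y' ∈ fig2Step y, (0 ≤ B x y z → 0 ≤ B x' y' z)) := by
  rintro ⟨B, ξ, hξ, hinit, hout, hstep⟩
  obtain ⟨xns, hmem, -, hB0⟩ := hinit 3 reach03
  rcases hmem with h4 | h6
  · -- xns = 4 : use x' = 2, y' must be 5, but outputs differ
    subst h4
    obtain ⟨y', hy', himp⟩ := hstep 0 4 3 2 step02 inPath2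
    have : y' = 5 := by simpa [fig2Step] using hy'
    subst this
    have h1 : (0:ℝ) ≤ B 2 5 3 := himp hB0
    have h2 : B 2 5 3 ≤ -ξ := hout 2 5 3 (by simp [fig2Out])
    linarith
  · -- xns = 6 : use x' = 1, y' must be 7, but outputs differ
    simp only [Set.mem_singleton_iff] at h6
    subst h6
    obtain ⟨y', hy', himp⟩ := hstep 0 6 3 1 step01 inPath1
    have : y' = 7 := by simpa [fig2Step] using hy'
    subst this
    have h1 : (0:ℝ) ≤ B 1 7 3 := himp hB0
    have h2 : B 1 7 3 ≤ -ξ := hout 1 7 3 (by simp [fig2Out])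
    linarith
end

section
/- Let (X, X₀, f) be a nondeterministic system with secret set X_s and output map o, and suppose B : X × X → ℝ is an augmented barrier certificate for opacity with parameter ξ > 0: (1) for every x_s ∈ X₀ ∩ X_s there exists x_ns ∈ X₀ \ X_s with o(x_s) = o(x_ns) and B(x_s, x_ns) ≥ 0; (2) B(x, y) ≤ −ξ whenever o(x) ≠ o(y); (3) for all x, y ∈ X and x' ∈ f(x) there exists y' ∈ f(y) with B(x, y) ≥ 0 → B(x', y') ≥ 0. Then the system is initial-state opaque for finite prefixes: for every finite path ⟨y₀, …, yₙ⟩ with y₀ ∈ X₀ ∩ X_s, there exists a finite path ⟨z₀, …, zₙ⟩ with z₀ ∈ X₀ \ X_s and o(y_i) = o(z_i) for all 0 ≤ i ≤ n. -/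
/-- Soundness of augmented barrier certificates for initial-state opacity
(finite prefixes): every secret-origin finite path is output-matched by a
non-secret-origin finite path of the same length. -/
theorem augmented_barrier_opacity {X O : Type*} (f : X → Set X) (X0 Xs : Set X)
    (o : X → O) (B : X → X → ℝ) (ξ : ℝ) (hξ : 0 < ξ)
    (hinit : ∀ xs ∈ X0 ∩ Xs, ∃ xns ∈ X0 \ Xs, o xs = o xns ∧ 0 ≤ B xs xns)
    (huns : ∀ x y : X, o x ≠ o y → B x y ≤ -ξ)
    (hstep : ∀ x y : X, ∀ x' ∈ f x, ∃ y' ∈ f y, (0 ≤ B x y → 0 ≤ B x' y')) :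
    ∀ (y : ℕ → X) (n : ℕ), y 0 ∈ X0 ∩ Xs → (∀ k < n, y (k + 1) ∈ f (y k)) →
      ∃ z : ℕ → X, z 0 ∈ X0 \ Xs ∧ (∀ k < n, z (k + 1) ∈ f (z k)) ∧
        ∀ i ≤ n, o (y i) = o (z i) := by
  intro y n h0 hpath
  choose F hF hFB using hstep
  obtain ⟨x0, hx0, ho0, hB0⟩ := hinit (y 0) h0
  classical
  let z : ℕ → X := fun k => Nat.rec x0
    (fun k zk => if h : y (k + 1) ∈ f (y k) then F (y k) zk (y (k+1)) h else zk) k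
  have hz0 : z 0 = x0 := rfl
  have hzsucc : ∀ k (hk : k < n), z (k + 1) = F (y k) (z k) (y (k+1)) (hpath k hk) := by
    intro k hk
    simp only [z, dif_pos (hpath k hk)]
  -- invariant
  have hinv : ∀ k ≤ n, 0 ≤ B (y k) (z k) := by
    intro k hk
    induction k with
    | zero => exact hB0
    | succ m ih =>
      have hm : m < n := Nat.lt_of_succ_le hk
      rw [hzsucc m hm]
      exact hFB (y m) (z m) (y (m+1)) (hpath m hm) (ih (le_of_lt hm))
  refine ⟨z, hx0, ?_, ?_⟩
  · intro k hk
    rw [hzsucc k hk]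
    exact hF (y k) (z k) (y (k+1)) (hpath k hk)
  · intro i hi
    by_contra hne
    have := huns (y i) (z i) hne
    linarith [hinv i hi]
end

section
/- Let ξ > 0 and V : ℕ → ℝ be such that V(0) ≥ 0 and there exists an infinite set A ⊆ ℕ of 'accepting' indices with: for i ∈ A, V(i) ≥ 0 → V(i+1) ≥ 0; and for i ∉ A, V(i) ≥ 0 → (V(i+1) ≥ 0 ∧ V(i+1) ≤ V(i) − ξ). Then V(i) ≥ 0 for all i ∈ ℕ. Conversely, if A is finite (A ⊆ {0, …, j} for some j) and the same step conditions hold with V(0) ≥ 0, then a contradiction follows. -/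
/-- Büchi-acceptance argument: the certificate value stays nonnegative forever,
and the set of accepting indices must be infinite. -/
theorem buchi_acceptance_ranking (ξ : ℝ) (hξ : 0 < ξ) (V : ℕ → ℝ) (A : Set ℕ)
    (h0 : 0 ≤ V 0)
    (hacc : ∀ i ∈ A, 0 ≤ V i → 0 ≤ V (i + 1))
    (hrank : ∀ i ∉ A, 0 ≤ V i → 0 ≤ V (i + 1) ∧ V (i + 1) ≤ V i - ξ) :
    (∀ i : ℕ, 0 ≤ V i) ∧ ¬ A.Finite := by
  have hnn : ∀ i : ℕ, 0 ≤ V i := by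
    intro i
    induction i with
    | zero => exact h0
    | succ n ih =>
      by_cases hn : n ∈ A
      · exact hacc n hn ih
      · exact (hrank n hn ih).1
  refine ⟨hnn, ?_⟩
  intro hfin
  obtain ⟨j, hj⟩ : ∃ j, ∀ i ∈ A, i ≤ j := by
    rcases hfin.bddAbove with ⟨j, hj⟩
    exact ⟨j, fun i hi => hj hi⟩
  have key : ∀ k : ℕ, V (j + 1 + k) ≤ V (j + 1) - k * ξ := by
    intro k
    induction k with
    | zero => simp
    | succ n ih =>
      have hmem : j + 1 + n ∉ A := fun h => by
        have := hj _ h; omega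
      have h2 := (hrank _ hmem (hnn _)).2
      have : V (j + 1 + (n + 1)) ≤ V (j + 1 + n) - ξ := by
        exact h2
      push_cast
      nlinarith
  obtain ⟨k, hk⟩ := exists_nat_gt (V (j + 1) / ξ)
  have := key k
  have hkξ : V (j + 1) < k * ξ := by
    rw [div_lt_iff₀ hξ] at hk; linarith
  have := hnn (j + 1 + k)
  linarith
end
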